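/- Fix ħ ∈ ℂ with ħ ≠ 0 and z ∈ ℂ. Let β : ℂ → ℂ be real-differentiable at z and P : ℂ → ℂ any function, and define M(w) = [[1, ħ·β(w)], [0, 1]] and A₁(w) = ħ⁻¹·[[0, P(w)], [1, 0]] − β(w)·diag(1, −1). Then: (a) M(z)·A₁(z)·M(z)⁻¹ − (∂_z M(z))·M(z)⁻¹ = ħ⁻¹·[[0, P(z)], [1, 0]] + ħ·(β(z)² − ∂_z β(z))·[[0,1],[0,0]]; and (b) if λ : ℂ → ℝ satisfies ∂_z̄ β(z) = λ(z)², then with A₂(w) = ħ·[[0, λ(w)²], [0, 0]] one has M(z)·A₂(z)·M(z)⁻¹ − (∂_z̄ M(z))·M(z)⁻¹ = 0. (This is the gauge transformation taking the R → 0 limiting connection of the SL(2,ℂ) Hitchin family to the standard oper form.) -/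

import Mathlib

/-!
Write `N = [[0,1],[0,0]]`. The gauge `M = 1 + ħβ·N` is unipotent, so `M⁻¹ = 1 - ħβ·N`, and
since `M - 1` is a scalar function times the constant matrix `N`, its Wirtinger derivatives are
`ħ(∂_z β)·N` and `ħ(∂_z̄ β)·N`. Both identities then reduce to `2 × 2` matrix algebra; in (b)
the connection is a multiple of `N`, which commutes with `M`.
-/

open Matrix Complex

attribute [local instance] Matrix.normedAddCommGroup Matrix.normedSpace

/-- The Wirtinger derivative `∂_z F(z) = ½(DF(z)(1) - i·DF(z)(i))`, where `DF(z)` is the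
real Fréchet derivative. -/
noncomputable def dz {E : Type*} [NormedAddCommGroup E] [NormedSpace ℂ E]
    (F : ℂ → E) (z : ℂ) : E :=
  (2⁻¹ : ℂ) • (fderiv ℝ F z 1 - Complex.I • fderiv ℝ F z Complex.I)

/-- The Wirtinger derivative `∂_z̄ F(z) = ½(DF(z)(1) + i·DF(z)(i))`. -/
noncomputable def dzbar {E : Type*} [NormedAddCommGroup E] [NormedSpace ℂ E]
    (F : ℂ → E) (z : ℂ) : E :=
  (2⁻¹ : ℂ) • (fderiv ℝ F z 1 + Complex.I • fderiv ℝ F z Complex.I)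

section Wirtinger

variable {E : Type*} [NormedAddCommGroup E] [NormedSpace ℂ E] {f : ℂ → ℂ} {z : ℂ}

theorem fderiv_const_add_smul_const (c v : E) (hf : DifferentiableAt ℝ f z) :
    fderiv ℝ (fun w => c + f w • v) z = (fderiv ℝ f z).smulRight v :=
  ((hf.hasFDerivAt.smul_const v).const_add c).fderiv

theorem dz_const_add_smul_const (c v : E) (hf : DifferentiableAt ℝ f z) :
    dz (fun w => c + f w • v) z = dz f z • v := by
  simp only [dz, fderiv_const_add_smul_const c v hf, ContinuousLinearMap.smulRight_apply,
    smul_eq_mul, sub_smul, mul_smul]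

theorem dzbar_const_add_smul_const (c v : E) (hf : DifferentiableAt ℝ f z) :
    dzbar (fun w => c + f w • v) z = dzbar f z • v := by
  simp only [dzbar, fderiv_const_add_smul_const c v hf, ContinuousLinearMap.smulRight_apply,
    smul_eq_mul, add_smul, mul_smul]

theorem dz_const_mul (a : ℂ) (hf : DifferentiableAt ℝ f z) :
    dz (fun w => a * f w) z = a * dz f z := by
  simp only [dz, fderiv_const_mul hf, _root_.smul_apply, smul_eq_mul]
  ring

theorem dzbar_const_mul (a : ℂ) (hf : DifferentiableAt ℝ f z) :
    dzbar (fun w => a * f w) z = a * dzbar f z := by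
  simp only [dzbar, fderiv_const_mul hf, _root_.smul_apply, smul_eq_mul]
  ring

end Wirtinger

section UnipotentGauge

theorem unipotent_eq_one_add_smul (x : ℂ) :
    (!![1, x; 0, 1] : Matrix (Fin 2) (Fin 2) ℂ) = 1 + x • !![0, 1; 0, 0] := by
  ext i j; fin_cases i <;> fin_cases j <;> simp

theorem unipotent_inv (x : ℂ) :
    (!![1, x; 0, 1] : Matrix (Fin 2) (Fin 2) ℂ)⁻¹ = !![1, -x; 0, 1] := by
  refine inv_eq_right_inv ?_
  rw [Matrix.mul_fin_two, Matrix.one_fin_two]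
  simp

theorem unipotent_gauge_upper_nilpotent (x a y : ℂ) :
    (!![1, x; 0, 1] : Matrix (Fin 2) (Fin 2) ℂ) * (a • !![0, y; 0, 0]) * !![1, -x; 0, 1]
      - ((a * y) • !![0, 1; 0, 0]) * !![1, -x; 0, 1] = 0 := by
  ext i j
  fin_cases i <;> fin_cases j <;> simp

theorem unipotent_gauge_oper_form {ħ : ℂ} (hh : ħ ≠ 0) (b p d : ℂ) :
    (!![1, ħ * b; 0, 1] : Matrix (Fin 2) (Fin 2) ℂ)
        * (ħ⁻¹ • !![0, p; 1, 0] - b • !![1, 0; 0, -1]) * !![1, -(ħ * b); 0, 1]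
      - ((ħ * d) • !![0, 1; 0, 0]) * !![1, -(ħ * b); 0, 1]
      = ħ⁻¹ • !![0, p; 1, 0] + (ħ * (b ^ 2 - d)) • !![0, 1; 0, 0] := by
  ext i j
  fin_cases i <;> fin_cases j <;> simp <;> field_simp <;> ring

end UnipotentGauge

/-- The gauge transformation `M = [[1, ħβ],[0,1]]` takes the `R → 0` limiting connection
of the SL(2,ℂ) Hitchin family to the standard oper form:
(a) `M A₁ M⁻¹ - (∂_z M) M⁻¹ = ħ⁻¹[[0,P],[1,0]] + ħ(β² - ∂_z β)[[0,1],[0,0]]`, and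
(b) if `∂_z̄ β(z) = λ(z)²` then with `A₂ = ħ[[0,λ²],[0,0]]` one has
`M A₂ M⁻¹ - (∂_z̄ M) M⁻¹ = 0`. -/
theorem gauge_to_oper_form (hbar : ℂ) (hh : hbar ≠ 0) (z : ℂ)
    (β : ℂ → ℂ) (hβ : DifferentiableAt ℝ β z) (P : ℂ → ℂ)
    (M : ℂ → Matrix (Fin 2) (Fin 2) ℂ)
    (hM : M = fun w => (!![1, hbar * β w; 0, 1] : Matrix (Fin 2) (Fin 2) ℂ))
    (A₁ : ℂ → Matrix (Fin 2) (Fin 2) ℂ)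
    (hA₁ : A₁ = fun w => hbar⁻¹ • (!![0, P w; 1, 0] : Matrix (Fin 2) (Fin 2) ℂ)
      - β w • (!![1, 0; 0, -1] : Matrix (Fin 2) (Fin 2) ℂ)) :
    (M z * A₁ z * (M z)⁻¹ - dz M z * (M z)⁻¹
        = hbar⁻¹ • (!![0, P z; 1, 0] : Matrix (Fin 2) (Fin 2) ℂ)
          + (hbar * ((β z) ^ 2 - dz β z)) •
            (!![0, 1; 0, 0] : Matrix (Fin 2) (Fin 2) ℂ)) ∧
    (∀ lam : ℂ → ℝ, dzbar β z = ((lam z : ℂ)) ^ 2 →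
      ∀ A₂ : ℂ → Matrix (Fin 2) (Fin 2) ℂ,
        A₂ = (fun w => hbar • (!![0, ((lam w : ℂ)) ^ 2; 0, 0] :
          Matrix (Fin 2) (Fin 2) ℂ)) →
        M z * A₂ z * (M z)⁻¹ - dzbar M z * (M z)⁻¹ = 0) := by
  have hM_add : M = fun w => 1 + (hbar * β w) • !![0, 1; 0, 0] := by
    simp only [hM, unipotent_eq_one_add_smul]
  have hM_inv : (M z)⁻¹ = !![1, -(hbar * β z); 0, 1] := by
    rw [hM, unipotent_inv]
  have hhβ : DifferentiableAt ℝ (fun w => hbar * β w) z := hβ.const_mul hbar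
  refine ⟨?_, fun lam hlam A₂ hA₂ => ?_⟩
  · have hdzM : dz M z = (hbar * dz β z) • !![0, 1; 0, 0] := by
      rw [hM_add, dz_const_add_smul_const _ _ hhβ, dz_const_mul _ hβ]
    rw [hdzM, hM_inv, hA₁, hM]
    exact unipotent_gauge_oper_form hh _ _ _
  · have hdzbarM : dzbar M z = (hbar * (lam z : ℂ) ^ 2) • !![0, 1; 0, 0] := by
      rw [hM_add, dzbar_const_add_smul_const _ _ hhβ, dzbar_const_mul _ hβ, hlam]
    rw [hdzbarM, hM_inv, hA₂, hM]
    exact unipotent_gauge_upper_nilpotent _ _ _
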